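/- Let d ≥ 1 be an integer and let s > 0 be a real number. For every measurable g : ℝ^d → ℂ such that ξ ↦ ⟨ξ⟩^s g(ξ) belongs to L²(ℝ^d), the series Σ_{j=1}^∞ (−1)^{j+1} C(s/2, j) · (ξ ↦ ⟨ξ⟩^{s−2j} g(ξ)) converges in L²(ℝ^d), and its sum is the function ξ ↦ (⟨ξ⟩^s − |ξ|^s) g(ξ). -/

import Mathlib

open MeasureTheory Filter

/-- The generalized binomial coefficient `C(α, j) = α(α−1)⋯(α−j+1)/j!`. -/
noncomputable def genBinom (α : ℝ) (j : ℕ) : ℝ :=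
  (∏ i ∈ Finset.range j, (α - (i : ℝ))) / (Nat.factorial j : ℝ)

/-- The Japanese bracket `⟨ξ⟩ = (1 + |ξ|²)^{1/2}`. -/
noncomputable def jbracket {d : ℕ} (ξ : EuclideanSpace ℝ (Fin d)) : ℝ :=
  Real.sqrt (1 + ‖ξ‖ ^ 2)

lemma genBinom_zero (α : ℝ) : genBinom α 0 = 1 := by simp [genBinom]

lemma genBinom_succ (α : ℝ) (j : ℕ) :
    genBinom α (j + 1) = genBinom α j * ((α - j) / (j + 1)) := by
  have hj : (Nat.factorial j : ℝ) ≠ 0 := Nat.cast_ne_zero.2 (Nat.factorial_ne_zero j)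
  have hj1 : ((j : ℝ) + 1) ≠ 0 := by positivity
  rw [genBinom, genBinom, Finset.prod_range_succ, Nat.factorial_succ, div_mul_div_comm]
  push_cast
  rw [mul_comm ((j:ℝ)+1)]

lemma abs_genBinom_succ {α : ℝ} {j : ℕ} (h : α ≤ j) :
    ((j : ℝ) + 1) * |genBinom α (j + 1)| = ((j : ℝ) - α) * |genBinom α j| := by
  rw [genBinom_succ, abs_mul, abs_div]
  rw [abs_of_nonpos (by linarith : α - (j:ℝ) ≤ 0), abs_of_nonneg (by positivity : (0:ℝ) ≤ (j:ℝ)+1)]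
  have hj1 : ((j : ℝ) + 1) ≠ 0 := by positivity
  field_simp
  ring

lemma summable_abs_genBinom {α : ℝ} (hα : 0 < α) : Summable fun j => |genBinom α j| := by
  set N := ⌈α⌉₊ with hN
  have hαN : α ≤ N := Nat.le_ceil α
  rw [← summable_nat_add_iff N]
  apply summable_of_sum_range_le
    (c := ((N : ℝ) * |genBinom α N|) / α) (fun n => abs_nonneg _)
  intro n
  have key : ∀ i : ℕ, α * |genBinom α (i + N)| =
      ((i + N : ℕ) : ℝ) * |genBinom α (i + N)|
        - (((i + 1) + N : ℕ) : ℝ) * |genBinom α ((i + 1) + N)| := by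
    intro i
    have hle : α ≤ ((i + N : ℕ) : ℝ) := by
      push_cast; linarith [Nat.cast_nonneg (α := ℝ) i]
    have h2 := abs_genBinom_succ (α := α) (j := i + N) hle
    have : (i + 1) + N = (i + N) + 1 := by ring
    rw [this]
    push_cast at h2 ⊢
    linarith
  have hsum : α * ∑ i ∈ Finset.range n, |genBinom α (i + N)|
      = ((0 + N : ℕ) : ℝ) * |genBinom α (0 + N)|
        - ((n + N : ℕ) : ℝ) * |genBinom α (n + N)| := by
    rw [Finset.mul_sum]
    rw [Finset.sum_congr rfl (fun i _ => key i)]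
    exact Finset.sum_range_sub' (fun i => ((i + N : ℕ) : ℝ) * |genBinom α (i + N)|) n
  rw [div_eq_inv_mul, ← mul_le_mul_iff_right₀ hα, ← mul_assoc, mul_inv_cancel₀ (ne_of_gt hα), one_mul,
    hsum]
  have : (0:ℝ) ≤ ((n + N : ℕ) : ℝ) * |genBinom α (n + N)| := by positivity
  simp only [zero_add]
  linarith

lemma summable_mul_geom_pred {r : ℝ} (h0 : 0 ≤ r) (h1 : r < 1) :
    Summable fun j : ℕ => (j : ℝ) * r ^ (j - 1) := by
  apply (summable_nat_add_iff 1).1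
  have h1' : ‖r‖ < 1 := by rwa [Real.norm_eq_abs, abs_of_nonneg h0]
  have hs := (summable_pow_mul_geometric_of_norm_lt_one 1 h1').add
    (summable_geometric_of_norm_lt_one h1')
  refine hs.congr fun n => ?_
  push_cast
  simp [add_mul, pow_one]

lemma summable_genBinom_mul_pow {α x : ℝ} (hα : 0 < α) (hx : |x| ≤ 1) :
    Summable fun j => genBinom α j * x ^ j := by
  apply Summable.of_norm_bounded (summable_abs_genBinom hα)
  intro j
  rw [Real.norm_eq_abs, abs_mul, abs_pow]
  calc |genBinom α j| * |x| ^ j ≤ |genBinom α j| * 1 := by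
        gcongr
        exact pow_le_one₀ (abs_nonneg x) hx
    _ = _ := mul_one _

lemma summable_genBinom_deriv {α x r : ℝ} (hα : 0 < α) (h0 : 0 ≤ r) (h1 : r < 1)
    (hx : |x| ≤ r) :
    Summable fun j : ℕ => genBinom α j * ((j : ℝ) * x ^ (j - 1)) := by
  set M := ∑' j, |genBinom α j| with hM
  have hMb : ∀ j, |genBinom α j| ≤ M :=
    fun j => Summable.le_tsum (summable_abs_genBinom hα) j (fun i _ => abs_nonneg _)
  apply Summable.of_norm_bounded (g := fun j : ℕ => M * ((j : ℝ) * r ^ (j - 1)))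
    ((summable_mul_geom_pred h0 h1).mul_left M)
  intro j
  rw [Real.norm_eq_abs, abs_mul, abs_mul, abs_pow, Nat.abs_cast]
  gcongr
  all_goals first
    | exact (abs_nonneg _).trans (hMb 0)
    | exact hMb j
    | exact abs_nonneg x

lemma hasDerivAt_binomSeries {α r : ℝ} (hα : 0 < α) (h0 : 0 < r) (h1 : r < 1)
    {x : ℝ} (hx : |x| < r) :
    HasDerivAt (fun y => ∑' j, genBinom α j * y ^ j)
      (∑' j : ℕ, genBinom α j * ((j : ℝ) * x ^ (j - 1))) x := by
  set M := ∑' j, |genBinom α j| with hM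
  have hMb : ∀ j, |genBinom α j| ≤ M :=
    fun j => Summable.le_tsum (summable_abs_genBinom hα) j (fun i _ => abs_nonneg _)
  have hball : x ∈ Metric.ball (0 : ℝ) r := by
    simpa [Real.dist_eq] using hx
  refine hasDerivAt_tsum_of_isPreconnected
    (u := fun j : ℕ => M * ((j : ℝ) * r ^ (j - 1)))
    ((summable_mul_geom_pred h0.le h1).mul_left M)
    Metric.isOpen_ball (convex_ball (0:ℝ) r).isPreconnected
    (g := fun j y => genBinom α j * y ^ j)
    (g' := fun j y => genBinom α j * ((j : ℝ) * y ^ (j - 1)))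
    (fun j y _ => (hasDerivAt_pow j y).const_mul _) ?_ (Metric.mem_ball_self h0) ?_ hball
  · intro j y hy
    have hyr : |y| ≤ r := by
      rw [Metric.mem_ball, Real.dist_eq, sub_zero] at hy
      exact hy.le
    rw [Real.norm_eq_abs, abs_mul, abs_mul, abs_pow, Nat.abs_cast]
    show |genBinom α j| * ((j:ℝ) * |y| ^ (j - 1)) ≤ M * ((j:ℝ) * r ^ (j - 1))
    gcongr
    all_goals first
      | exact (abs_nonneg _).trans (hMb 0)
      | exact hMb j
      | exact abs_nonneg y
  · apply summable_of_ne_finset_zero (s := ({0} : Finset ℕ))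
    intro j hj
    simp only [Finset.mem_singleton] at hj
    simp [zero_pow hj]

lemma binom_ode {α x : ℝ} (hα : 0 < α) (hx : |x| < 1) :
    (1 + x) * (∑' j : ℕ, genBinom α j * ((j : ℝ) * x ^ (j - 1)))
      = α * ∑' j : ℕ, genBinom α j * x ^ j := by
  have S1 : Summable fun j : ℕ => genBinom α j * x ^ j :=
    summable_genBinom_mul_pow hα hx.le
  have S2 : Summable fun j : ℕ => genBinom α j * ((j : ℝ) * x ^ (j - 1)) :=
    summable_genBinom_deriv hα (abs_nonneg x) hx le_rfl
  have S3 : Summable fun j : ℕ => (j : ℝ) * (genBinom α j * x ^ j) := by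
    have := (summable_genBinom_deriv hα (abs_nonneg x) hx le_rfl).mul_left x
    refine this.congr fun j => ?_
    rcases j with _ | k
    · simp
    · simp only [Nat.succ_sub_one]
      push_cast
      rw [pow_succ]
      ring
  set D := ∑' j : ℕ, genBinom α j * ((j : ℝ) * x ^ (j - 1)) with hD
  have hshift : D = ∑' k : ℕ, genBinom α (k + 1) * (((k : ℝ) + 1) * x ^ k) := by
    rw [hD, Summable.tsum_eq_zero_add S2]
    simp
  have hterm : ∀ k : ℕ, genBinom α (k + 1) * (((k : ℝ) + 1) * x ^ k)
      = α * (genBinom α k * x ^ k) - (k : ℝ) * (genBinom α k * x ^ k) := by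
    intro k
    have h1 : ((k : ℝ) + 1) ≠ 0 := by positivity
    rw [genBinom_succ]
    field_simp
  have hDsum : D = α * (∑' j : ℕ, genBinom α j * x ^ j)
      - ∑' j : ℕ, (j : ℝ) * (genBinom α j * x ^ j) := by
    rw [hshift]
    rw [tsum_congr hterm, Summable.tsum_sub (S1.mul_left α) S3, tsum_mul_left]
  have hxD : x * D = ∑' j : ℕ, (j : ℝ) * (genBinom α j * x ^ j) := by
    rw [hD, ← tsum_mul_left]
    refine tsum_congr fun j => ?_
    rcases j with _ | k
    · simp
    · simp only [Nat.succ_sub_one]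
      push_cast
      rw [pow_succ]
      ring
  rw [add_mul, one_mul, hxD, hDsum]
  ring

lemma tsum_genBinom_eq {α : ℝ} (hα : 0 < α) {x : ℝ} (hx : |x| < 1) :
    ∑' j : ℕ, genBinom α j * x ^ j = (1 + x) ^ α := by
  set φ : ℝ → ℝ := fun z => (∑' j : ℕ, genBinom α j * z ^ j) * (1 + z) ^ (-α) with hφ
  have key : ∀ y ∈ Set.Ioo (-1:ℝ) 1, HasDerivAt φ 0 y := by
    intro y hy
    obtain ⟨hy1, hy2⟩ := hy
    have hyabs : |y| < 1 := abs_lt.2 ⟨hy1, hy2⟩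
    set r := (|y| + 1) / 2 with hr
    have h0r : 0 < r := by positivity
    have hr1 : r < 1 := by rw [hr]; linarith
    have hyr : |y| < r := by rw [hr]; linarith
    have hp : (0:ℝ) < 1 + y := by linarith
    have hh := hasDerivAt_binomSeries hα h0r hr1 hyr
    have hg : HasDerivAt (fun z : ℝ => (1 + z) ^ (-α)) (-α * (1 + y) ^ (-α - 1)) y := by
      have h1 : HasDerivAt (fun z : ℝ => 1 + z) 1 y := (hasDerivAt_id y).const_add 1
      have h2 := h1.rpow_const (p := -α) (Or.inl hp.ne')
      simpa using h2
    have hmul := hh.mul hg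
    refine hmul.congr_deriv (Eq.symm ?_)
    have hrw : (1 + y) ^ (-α) = (1 + y) ^ (-α - 1) * (1 + y) := by
      rw [← Real.rpow_add_one hp.ne']
      norm_num
    rw [hrw]
    linear_combination (-((1 + y) ^ (-α - 1))) * (binom_ode hα hyabs)
  have hx' : x ∈ Set.Ioo (-1:ℝ) 1 := ⟨(abs_lt.1 hx).1, (abs_lt.1 hx).2⟩
  have h0' : (0:ℝ) ∈ Set.Ioo (-1:ℝ) 1 := by constructor <;> norm_num
  have hconst := (convex_Ioo (-1:ℝ) 1).is_const_of_fderivWithin_eq_zero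
      (f := φ)
      (fun y hy => ((key y hy).differentiableAt).differentiableWithinAt)
      (fun y hy => ?_) hx' h0'
  · have hφ0 : φ 0 = 1 := by
      rw [hφ]
      simp only []
      have : ∑' j : ℕ, genBinom α j * (0:ℝ) ^ j = 1 := by
        rw [tsum_eq_single 0 (fun j hj => by simp [zero_pow hj])]
        simp [genBinom_zero]
      rw [this]
      simp
    rw [hφ0] at hconst
    have hp : (0:ℝ) < 1 + x := by linarith [(abs_lt.1 hx).1]
    have hne : (1 + x) ^ α ≠ 0 := (Real.rpow_pos_of_pos hp α).ne'
    have := hconst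
    rw [hφ] at this
    simp only [] at this
    rw [Real.rpow_neg hp.le] at this
    field_simp at this
    exact this
  · rw [fderivWithin_of_isOpen isOpen_Ioo hy, (key y hy).hasFDerivAt.fderiv]
    refine ContinuousLinearMap.ext fun w => ?_
    simp

lemma hasSum_key {s t w : ℝ} (hs : 0 < s) (hw : 0 < w) (ht1 : 1 < t)
    (ht2 : t ^ 2 = 1 + w ^ 2) :
    HasSum (fun j : ℕ => (-1:ℝ) ^ (j + 1) * genBinom (s / 2) j * t ^ (s - 2 * (j:ℝ)))
      (-(w ^ s)) := by
  have hα : 0 < s / 2 := by linarith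
  have htpos : 0 < t := lt_trans one_pos ht1
  have ht2pos : (0:ℝ) < t ^ 2 := by positivity
  set x : ℝ := -(1 / t ^ 2) with hxdef
  have hxabs : |x| < 1 := by
    rw [hxdef, abs_neg, abs_of_nonneg (by positivity : (0:ℝ) ≤ 1 / t ^ 2)]
    rw [div_lt_one ht2pos]
    nlinarith
  have h1x : 1 + x = w ^ 2 / t ^ 2 := by
    rw [hxdef]
    field_simp
    linarith
  have hsum0 : Summable fun j : ℕ => genBinom (s / 2) j * x ^ j :=
    summable_genBinom_mul_pow hα hxabs.le
  have hval : ∑' j : ℕ, genBinom (s / 2) j * x ^ j = w ^ s / t ^ s := by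
    rw [tsum_genBinom_eq hα hxabs, h1x]
    rw [Real.div_rpow (by positivity) (by positivity)]
    have e1 : (w ^ 2) ^ (s / 2) = w ^ s := by
      rw [← Real.rpow_natCast w 2, ← Real.rpow_mul hw.le]
      congr 1
      push_cast
      ring
    have e2 : (t ^ 2) ^ (s / 2) = t ^ s := by
      rw [← Real.rpow_natCast t 2, ← Real.rpow_mul htpos.le]
      congr 1
      push_cast
      ring
    rw [e1, e2]
  have hts : (0:ℝ) < t ^ s := Real.rpow_pos_of_pos htpos s
  have hmain := (hsum0.hasSum_iff.2 hval).mul_left (-(t ^ s))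
  have hfun : ∀ j : ℕ, -(t ^ s) * (genBinom (s / 2) j * x ^ j)
      = (-1:ℝ) ^ (j + 1) * genBinom (s / 2) j * t ^ (s - 2 * (j:ℝ)) := by
    intro j
    have e3 : t ^ (s - 2 * (j:ℝ)) = t ^ s / (t ^ 2) ^ j := by
      rw [Real.rpow_sub htpos]
      congr 1
      have : (2 * (j:ℝ)) = ((2 * j : ℕ) : ℝ) := by push_cast; ring
      rw [this, Real.rpow_natCast, pow_mul]
    have e4 : x ^ j = (-1:ℝ) ^ j * (1 / (t ^ 2) ^ j) := by
      rw [hxdef, neg_pow, div_pow, one_pow]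
    rw [e3, e4, pow_succ]
    have h2j : ((t:ℝ) ^ 2) ^ j ≠ 0 := by positivity
    field_simp
    ring
  have : -(t ^ s) * (w ^ s / t ^ s) = -(w ^ s) := by
    field_simp
  rw [this] at hmain
  exact hmain.congr_fun fun j => (hfun j).symm

/-- For `d ≥ 1`, `s > 0` and every measurable `g : ℝ^d → ℂ` with `⟨·⟩^s g ∈ L²(ℝ^d)`,
the series `Σ_{j=1}^∞ (−1)^{j+1} C(s/2, j) ⟨·⟩^{s−2j} g` converges in `L²(ℝ^d)` to the
function `ξ ↦ (⟨ξ⟩^s − |ξ|^s) g(ξ)`: the `L²` distance between the partial sums and this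
function tends to `0`. -/
theorem multiplier_series_L2_convergence (d : ℕ) (hd : 1 ≤ d) (s : ℝ) (hs : 0 < s)
    (g : EuclideanSpace ℝ (Fin d) → ℂ) (hg : Measurable g)
    (hmem : MemLp (fun ξ => (jbracket ξ ^ s) • g ξ) 2 volume) :
    Tendsto
      (fun n : ℕ =>
        eLpNorm
          (fun ξ =>
            (∑ j ∈ Finset.Icc 1 n,
                (-1 : ℝ) ^ (j + 1) * genBinom (s / 2) j *
                  jbracket ξ ^ (s - 2 * (j : ℝ))) • g ξ -
              (jbracket ξ ^ s - ‖ξ‖ ^ s) • g ξ)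
          2 volume)
      atTop (nhds 0) := by
  have hα : 0 < s / 2 := by linarith
  have hA : Summable fun j => |genBinom (s / 2) j| := summable_abs_genBinom hα
  set T : ℕ → ℝ := fun m => ∑' i : ℕ, |genBinom (s / 2) (i + m)| with hT
  have hT0 : ∀ m, 0 ≤ T m := fun m => tsum_nonneg fun i => abs_nonneg _
  have hTtend : Tendsto (fun n : ℕ => T (n + 1)) atTop (nhds 0) := by
    have h1 : Tendsto (fun m : ℕ => ∑' i : ℕ, |genBinom (s / 2) (i + m)|) atTop (nhds 0) :=
      tendsto_sum_nat_add (fun j => |genBinom (s / 2) j|)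
    exact h1.comp (tendsto_add_atTop_nat 1)
  haveI : Nonempty (Fin d) := ⟨⟨0, hd⟩⟩
  have hae : ∀ᵐ ξ : EuclideanSpace ℝ (Fin d) ∂volume, ξ ≠ 0 := by
    rw [ae_iff]
    have h0 : {ξ : EuclideanSpace ℝ (Fin d) | ¬ ξ ≠ 0} = {0} := by ext ξ; simp
    rw [h0]
    exact measure_singleton 0
  set B := eLpNorm (fun ξ => (jbracket ξ ^ s) • g ξ) 2 volume with hB
  have hBfin : B ≠ ⊤ := hmem.2.ne
  have hpt : ∀ n : ℕ, ∀ ξ : EuclideanSpace ℝ (Fin d), ξ ≠ 0 →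
      ‖(∑ j ∈ Finset.Icc 1 n, (-1:ℝ) ^ (j+1) * genBinom (s / 2) j *
            jbracket ξ ^ (s - 2 * (j:ℝ))) • g ξ
        - (jbracket ξ ^ s - ‖ξ‖ ^ s) • g ξ‖
      ≤ T (n+1) * ‖(jbracket ξ ^ s) • g ξ‖ := by
    intro n ξ hξ
    set t := jbracket ξ with htdef
    set w := ‖ξ‖ with hwdef
    have hw : 0 < w := norm_pos_iff.2 hξ
    have ht2 : t ^ 2 = 1 + w ^ 2 := Real.sq_sqrt (by positivity)
    have ht1 : 1 < t := by
      have htnn : 0 ≤ t := Real.sqrt_nonneg _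
      nlinarith
    have htpos : 0 < t := lt_trans one_pos ht1
    have hts : 0 < t ^ s := Real.rpow_pos_of_pos htpos s
    set F : ℕ → ℝ := fun j => (-1:ℝ) ^ (j+1) * genBinom (s / 2) j * t ^ (s - 2 * (j:ℝ))
      with hF
    have hsumF : HasSum F (-(w ^ s)) := hasSum_key hs hw ht1 ht2
    have hFabs : ∀ j, |F j| ≤ |genBinom (s / 2) j| * t ^ s := by
      intro j
      rw [hF]
      show |(-1:ℝ) ^ (j+1) * genBinom (s / 2) j * t ^ (s - 2 * (j:ℝ))| ≤ _
      rw [abs_mul, abs_mul, abs_pow, abs_neg, abs_one, one_pow, one_mul,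
        abs_of_pos (Real.rpow_pos_of_pos htpos _)]
      have hle : s - 2 * (j:ℝ) ≤ s := by
        have : (0:ℝ) ≤ (j:ℝ) := Nat.cast_nonneg j
        linarith
      exact mul_le_mul_of_nonneg_left
        (Real.rpow_le_rpow_of_exponent_le ht1.le hle) (abs_nonneg _)
    have hF0 : F 0 = -(t ^ s) := by
      rw [hF]
      show (-1:ℝ) ^ (0+1) * genBinom (s / 2) 0 * t ^ (s - 2 * ((0:ℕ):ℝ)) = -(t ^ s)
      rw [genBinom_zero]
      norm_num
    have hIcc : ∑ j ∈ Finset.Icc 1 n, F j = ∑ j ∈ Finset.range (n+1), F j + t ^ s := by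
      have h1 := Finset.sum_range_succ' F n
      have h2 : ∑ j ∈ Finset.Icc 1 n, F j = ∑ i ∈ Finset.range n, F (i + 1) := by
        rw [← Finset.Ico_add_one_right_eq_Icc, Finset.sum_Ico_eq_sum_range]
        try simp only [Nat.add_sub_cancel]
        exact Finset.sum_congr rfl (fun i _ => by rw [add_comm])
      rw [h2, hF0] at *
      linarith
    have htail : ∑ j ∈ Finset.Icc 1 n, F j - (t ^ s - w ^ s)
        = -∑' i : ℕ, F (i + (n+1)) := by
      have hadd := Summable.sum_add_tsum_nat_add (f := F) (n+1) hsumF.summable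
      rw [hsumF.tsum_eq] at hadd
      rw [hIcc]
      linarith
    have hscalar : |∑ j ∈ Finset.Icc 1 n, F j - (t ^ s - w ^ s)| ≤ T (n+1) * t ^ s := by
      rw [htail, abs_neg]
      have hs1 : Summable fun i : ℕ => |genBinom (s / 2) (i + (n+1))| * t ^ s :=
        ((summable_nat_add_iff (n+1)).2 hA).mul_right _
      have hs2 : Summable fun i : ℕ => |F (i + (n+1))| :=
        Summable.of_nonneg_of_le (fun i => abs_nonneg _) (fun i => hFabs _) hs1
      calc |∑' i : ℕ, F (i + (n+1))| ≤ ∑' i : ℕ, |F (i + (n+1))| := by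
            simpa [Real.norm_eq_abs] using
              norm_tsum_le_tsum_norm (f := fun i : ℕ => F (i + (n+1)))
                (by simpa [Real.norm_eq_abs] using hs2)
        _ ≤ ∑' i : ℕ, |genBinom (s / 2) (i + (n+1))| * t ^ s :=
            Summable.tsum_le_tsum (fun i => hFabs _) hs2 hs1
        _ = T (n+1) * t ^ s := by rw [hT]; exact tsum_mul_right
    rw [← sub_smul, norm_smul, norm_smul, Real.norm_eq_abs, Real.norm_eq_abs,
      abs_of_pos hts, ← mul_assoc]
    exact mul_le_mul_of_nonneg_right hscalar (norm_nonneg _)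
  refine tendsto_of_tendsto_of_tendsto_of_le_of_le (g := fun _ => (0:ENNReal))
    (h := fun n => ENNReal.ofReal (T (n+1)) * B) tendsto_const_nhds ?_
    (fun n => zero_le) ?_
  · have h1 : Tendsto (fun n : ℕ => ENNReal.ofReal (T (n+1))) atTop (nhds 0) := by
      have := ENNReal.tendsto_ofReal hTtend
      simpa using this
    have h2 := ENNReal.Tendsto.mul_const h1 (Or.inr hBfin)
    simpa using h2
  · intro n
    refine le_trans (eLpNorm_mono_ae (g := fun ξ => T (n+1) • ((jbracket ξ ^ s) • g ξ)) ?_) ?_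
    · filter_upwards [hae] with ξ hξ
      rw [norm_smul, Real.norm_eq_abs, abs_of_nonneg (hT0 _)]
      exact hpt n ξ hξ
    · rw [show (fun ξ => T (n+1) • ((jbracket ξ ^ s) • g ξ))
          = T (n+1) • (fun ξ => (jbracket ξ ^ s) • g ξ) from rfl,
        eLpNorm_const_smul]
      have he : ‖T (n+1)‖ₑ = ENNReal.ofReal (T (n+1)) :=
        Real.enorm_eq_ofReal (hT0 _)
      rw [he]
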